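/- Let G be a finite simple graph with dominating ideal DI(G) and closed neighborhood ideal NI(G). Then a square-free monomial ∏_{i∈S} x_i lies in DI(G) if and only if S contains a dominating set of G, and the minimal primes of NI(G) are exactly the ideals (x_i : i ∈ S) for S a minimal dominating set of G. -/

import Mathlib

open MvPolynomial

variable {V : Type*} [Fintype V] (K : Type*) [Field K]

open scoped Classical in
/-- The monomial `∏_{j ∈ N[v]} x_j` of the closed neighborhood of `v`. -/
noncomputable def nbhdMonomial (G : SimpleGraph V) (v : V) : MvPolynomial V K :=
  X v * ∏ j ∈ Finset.univ.filter (fun j => G.Adj v j), X j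

/-- The closed neighborhood ideal of a graph. -/
noncomputable def NI (G : SimpleGraph V) : Ideal (MvPolynomial V K) :=
  Ideal.span (Set.range fun v => nbhdMonomial K G v)

/-- `S` is a dominating set of `G`. -/
def Dominates (G : SimpleGraph V) (S : Finset V) : Prop :=
  ∀ v : V, ∃ u ∈ S, u = v ∨ G.Adj v u

/-- `S` is a minimal dominating set of `G`. -/
def MinimalDominating (G : SimpleGraph V) (S : Finset V) : Prop :=
  Dominates G S ∧ ∀ T : Finset V, T ⊂ S → ¬ Dominates G T

/-- The dominating ideal of a graph. -/
noncomputable def DI (G : SimpleGraph V) : Ideal (MvPolynomial V K) :=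
  Ideal.span { m | ∃ S : Finset V, MinimalDominating G S ∧ m = ∏ i ∈ S, X i }

/-!
A prime `p ⊇ NI(G)` contains, for every vertex `v`, one of the variables `x_u` with `u ∈ N[v]`;
so the variables in `p` form a dominating set `S`, and `p ⊇ (x_i : i ∈ S)`. Conversely
`(x_i : i ∈ S)` is a prime containing `NI(G)` whenever `S` dominates. As `S ↦ (x_i : i ∈ S)` is
an order embedding, the minimal primes over `NI(G)` are the images of the minimal dominating sets.
Membership in `DI(G)` is read off from exponent vectors: a monomial lies in a monomial ideal iff
one of the generators divides it.
-/

namespace MvPolynomial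

variable {σ R : Type*}

theorem prod_X_eq_monomial_sum_single [CommSemiring R] (S : Finset σ) :
    ∏ i ∈ S, (X i : MvPolynomial σ R) = monomial (∑ i ∈ S, Finsupp.single i 1) 1 :=
  (monomial_sum_one S _).symm

theorem sum_single_one_le_sum_single_one_iff {S T : Finset σ} :
    ∑ i ∈ S, Finsupp.single i 1 ≤ ∑ i ∈ T, Finsupp.single i 1 ↔ S ⊆ T := by
  classical
  have h_toFinsupp (S : Finset σ) : ∑ i ∈ S, Finsupp.single i 1 = Multiset.toFinsupp S.val := by
    simp_rw [← Multiset.toFinsupp_singleton, ← map_sum, Finset.sum_eq_multiset_sum,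
      Multiset.sum_map_singleton]
  rw [h_toFinsupp, h_toFinsupp, ← Finsupp.coe_orderIsoMultiset_symm, OrderIso.le_iff_le,
    Finset.val_le_iff]

theorem prod_X_mem_span_prod_X_iff [CommSemiring R] [Nontrivial R] {P : Finset σ → Prop}
    {S : Finset σ} :
    ∏ i ∈ S, (X i : MvPolynomial σ R) ∈ Ideal.span {m | ∃ T, P T ∧ m = ∏ i ∈ T, X i} ↔
      ∃ T, P T ∧ T ⊆ S := by
  classical
  have h_gens : {m | ∃ T, P T ∧ m = ∏ i ∈ T, (X i : MvPolynomial σ R)} =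
      (fun d => monomial d 1) '' ((fun T => ∑ i ∈ T, Finsupp.single i 1) '' {T | P T}) := by
    ext m
    simp [prod_X_eq_monomial_sum_single, eq_comm]
  rw [h_gens, prod_X_eq_monomial_sum_single, mem_ideal_span_monomial_image,
    support_monomial, if_neg one_ne_zero]
  simp [sum_single_one_le_sum_single_one_iff]

theorem X_mem_span_X_image_iff [CommSemiring R] [Nontrivial R] {s : Set σ} {i : σ} :
    (X i : MvPolynomial σ R) ∈ Ideal.span (X '' s) ↔ i ∈ s := by
  classical
  simp [mem_ideal_span_X_image, support_X, Finsupp.single_apply]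

theorem isPrime_span_X_image [CommRing R] [IsDomain R] (s : Set σ) :
    (Ideal.span (X '' s : Set (MvPolynomial σ R))).IsPrime := by
  classical
  set I := Ideal.span (X '' s : Set (MvPolynomial σ R))
  -- `I` is the kernel of the substitution `φ` killing the variables in `s`, because `φ` is the
  -- identity modulo `I`.
  let φ : MvPolynomial σ R →ₐ[R] MvPolynomial σ R := aeval fun i => if i ∈ s then 0 else X i
  have h_mod_I : (Ideal.Quotient.mkₐ R I).comp φ = Ideal.Quotient.mkₐ R I := by
    ext i
    by_cases hi : i ∈ s
    · simp only [AlgHom.comp_apply, φ, aeval_X, if_pos hi, map_zero, Ideal.Quotient.mkₐ_eq_mk]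
      exact (Ideal.Quotient.eq_zero_iff_mem.2 (Ideal.subset_span (Set.mem_image_of_mem X hi))).symm
    · simp [φ, hi]
  have h_ker : I = RingHom.ker φ := by
    refine le_antisymm ?_ fun f hf => ?_
    · rw [Ideal.span_le]
      rintro _ ⟨i, hi, rfl⟩
      simp [φ, hi]
    · rw [RingHom.mem_ker] at hf
      rw [← Ideal.Quotient.eq_zero_iff_mem, ← Ideal.Quotient.mkₐ_eq_mk R, ← h_mod_I]
      simp [hf]
  rw [h_ker]
  exact RingHom.ker_isPrime _

variable (σ R) in
noncomputable def spanXEmbedding [CommSemiring R] [Nontrivial R] :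
    Finset σ ↪o Ideal (MvPolynomial σ R) :=
  OrderEmbedding.ofMapLEIff (fun S => Ideal.span (X '' (S : Set σ))) fun S T => by
    refine ⟨fun h i hi => ?_, fun h => Ideal.span_mono (Set.image_mono h)⟩
    exact X_mem_span_X_image_iff.1 (h (Ideal.subset_span ⟨i, hi, rfl⟩))

end MvPolynomial

theorem minimalDominating_iff_minimal {V : Type*} {G : SimpleGraph V} {S : Finset V} :
    MinimalDominating G S ↔ Minimal (Dominates G) S := by
  rw [minimal_iff_forall_lt]
  rfl

theorem exists_minimalDominating_and_subset_iff {V : Type*} {G : SimpleGraph V}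
    {S : Finset V} : (∃ T, MinimalDominating G T ∧ T ⊆ S) ↔ ∃ T, T ⊆ S ∧ Dominates G T := by
  constructor
  · rintro ⟨T, hT, hTS⟩
    exact ⟨T, hTS, hT.1⟩
  · rintro ⟨T, hTS, hT⟩
    obtain ⟨T', hT'T, hT'⟩ := exists_minimal_le_of_wellFoundedLT (Dominates G) T hT
    exact ⟨T', minimalDominating_iff_minimal.2 hT', hT'T.trans hTS⟩

theorem NI_le_span_X_image_of_dominates {G : SimpleGraph V} {S : Finset V}
    (hS : Dominates G S) : NI K G ≤ Ideal.span (X '' (S : Set V)) := by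
  rw [NI, Ideal.span_le]
  rintro _ ⟨v, rfl⟩
  obtain ⟨u, hu, huv⟩ := hS v
  have hXu_dvd : (X u : MvPolynomial V K) ∣ nbhdMonomial K G v := by
    rcases huv with rfl | hadj
    · exact dvd_mul_right _ _
    · exact dvd_mul_of_dvd_right (Finset.dvd_prod_of_mem _ (by simpa using hadj)) _
  exact Ideal.mem_of_dvd _ hXu_dvd (Ideal.subset_span (Set.mem_image_of_mem X hu))

theorem exists_dominates_span_X_image_le {G : SimpleGraph V} {p : Ideal (MvPolynomial V K)}
    [hp : p.IsPrime] (hNI : NI K G ≤ p) :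
    ∃ S : Finset V, Dominates G S ∧ Ideal.span (X '' (S : Set V)) ≤ p := by
  classical
  refine ⟨Finset.univ.filter fun i => X i ∈ p, fun v => ?_, ?_⟩
  · have hv : nbhdMonomial K G v ∈ p := hNI (Ideal.subset_span ⟨v, rfl⟩)
    rcases hp.mem_or_mem hv with hXv | h_nbrs
    · exact ⟨v, by simpa using hXv, Or.inl rfl⟩
    · obtain ⟨u, hadj, hXu⟩ := hp.prod_mem_iff.1 h_nbrs
      exact ⟨u, by simpa using hXu, Or.inr (by simpa using hadj)⟩
  · rw [Ideal.span_le]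
    rintro _ ⟨i, hi, rfl⟩
    simpa using hi

theorem minimalPrimes_NI_eq_setOf_minimal_span_X_image (G : SimpleGraph V) :
    (NI K G).minimalPrimes =
      {p | Minimal (· ∈ spanXEmbedding V K '' {S | Dominates G S}) p} := by
  ext p
  rw [Set.mem_ofPred_eq, Set.mem_ofPred_eq, Ideal.IsMinimalPrime]
  refine minimal_iff_minimal_of_imp_of_forall ?_ ?_
  · rintro _ ⟨S, hS, rfl⟩
    exact ⟨isPrime_span_X_image _, NI_le_span_X_image_of_dominates K hS⟩
  · rintro q ⟨hq, hNI⟩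
    obtain ⟨S, hS, hle⟩ := exists_dominates_span_X_image_le K hNI
    exact ⟨_, hle, S, hS, rfl⟩

/-- A square-free monomial `∏_{i ∈ S} x_i` lies in `DI(G)` iff `S` contains a dominating
set of `G`, and the minimal primes of `NI(G)` are exactly the ideals `(x_i : i ∈ S)` for
`S` a minimal dominating set of `G`. -/
theorem DI_membership_and_minimalPrimes_NI (G : SimpleGraph V) :
    (∀ S : Finset V,
      (∏ i ∈ S, (X i : MvPolynomial V K)) ∈ DI K G ↔ ∃ T : Finset V, T ⊆ S ∧ Dominates G T) ∧
    (NI K G).minimalPrimes =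
      { p | ∃ S : Finset V, MinimalDominating G S ∧
        p = Ideal.span ((X : V → MvPolynomial V K) '' (S : Set V)) } := by
  refine ⟨fun S => ?_, ?_⟩
  · rw [DI, prod_X_mem_span_prod_X_iff, exists_minimalDominating_and_subset_iff]
  · rw [minimalPrimes_NI_eq_setOf_minimal_span_X_image, ← OrderEmbedding.image_setOfPred_minimal]
    ext p
    simp [minimalDominating_iff_minimal, eq_comm, spanXEmbedding]
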